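/- arXiv:1410.3842 — 3 statements merged into one kernel-verified Lean document; each statement's English description precedes it below -/
import Mathlib

section
/- Let λ₁ > 0 and consider the mean-field host density equation u' = (λ₁(1−u) − 1)u. If λ₁ ≤ 1, then every solution u : [0,∞) → ℝ with u(0) ∈ (0,1] satisfies u(t) → 0 as t → ∞. -/
/-!
The solution never vanishes: the equation is linear in `u` with the continuous coefficient
`λ₁(1 - u) - 1`, so `u(t) = u(0) exp ∫₀ᵗ (λ₁(1 - u) - 1)`. For positive `u` and `λ₁ ≤ 1`,
`u' = -λ₁u² + (λ₁ - 1)u ≤ -λ₁u²`, so `(1/u)' ≥ λ₁` and `1/u(t) ≥ 1/u(0) + λ₁t → ∞`.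
-/

open Filter Real Set

theorem exists_hasDerivAt_of_continuousOn_Ici {a : ℝ → ℝ} {c : ℝ} (ha : ContinuousOn a (Ici c)) :
    ∃ A : ℝ → ℝ, ∀ t ∈ Ici c, HasDerivAt A (a t) t := by
  have hb : Continuous fun s => a (max c s) :=
    ha.comp_continuous (continuous_const.max continuous_id) fun s => le_max_left c s
  refine ⟨fun t => ∫ s in c..t, a (max c s), fun t ht => ?_⟩
  simpa only [max_eq_right (mem_Ici.1 ht)] using (hb.integral_hasStrictDerivAt c t).hasDerivAt

theorem eq_mul_exp_sub_of_hasDerivAt {u a A : ℝ → ℝ} {c : ℝ}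
    (hu : ∀ t ∈ Ici c, HasDerivAt u (a t * u t) t) (hA : ∀ t ∈ Ici c, HasDerivAt A (a t) t)
    {t : ℝ} (ht : c ≤ t) : u t = u c * exp (A t - A c) := by
  set g : ℝ → ℝ := fun s => u s * exp (-A s)
  have hg : ∀ s ∈ Ici c, HasDerivAt g 0 s := fun s hs => by
    have h := (hu s hs).mul (hA s hs).fun_neg.exp
    rwa [show a s * u s * exp (-A s) + u s * (exp (-A s) * -a s) = 0 by ring] at h
  have hg_cont : ContinuousOn g (Icc c t) := fun s hs =>
    (hg s hs.1).continuousAt.continuousWithinAt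
  have hgt : g t = g c := constant_of_has_deriv_right_zero hg_cont
    (fun s hs => (hg s hs.1).hasDerivWithinAt) t ⟨ht, le_rfl⟩
  calc u t = g t * exp (A t) := by
        simp only [g, mul_assoc, ← exp_add, neg_add_cancel, exp_zero, mul_one]
    _ = u c * exp (A t - A c) := by rw [hgt, mul_assoc, ← exp_add, neg_add_eq_sub]

theorem pos_of_hasDerivAt_mul_self {u a : ℝ → ℝ} {c : ℝ} (ha : ContinuousOn a (Ici c))
    (hu : ∀ t ∈ Ici c, HasDerivAt u (a t * u t) t) (hc : 0 < u c) {t : ℝ} (ht : c ≤ t) :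
    0 < u t := by
  obtain ⟨A, hA⟩ := exists_hasDerivAt_of_continuousOn_Ici ha
  rw [eq_mul_exp_sub_of_hasDerivAt hu hA ht]
  positivity

theorem inv_add_mul_le_inv_of_hasDerivAt_le_neg_mul_sq {u u' : ℝ → ℝ} {k c : ℝ}
    (hu : ∀ t ∈ Ici c, HasDerivAt u (u' t) t) (hpos : ∀ t ∈ Ici c, 0 < u t)
    (hu' : ∀ t ∈ Ici c, u' t ≤ -k * u t ^ 2) {t : ℝ} (ht : c ≤ t) :
    (u c)⁻¹ + k * (t - c) ≤ (u t)⁻¹ := by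
  have hinv : ∀ s ∈ Ici c, HasDerivAt (fun s => (u s)⁻¹) (-u' s / u s ^ 2) s :=
    fun s hs => (hu s hs).inv (hpos s hs).ne'
  have hk : ∀ s ∈ interior (Ici c), k ≤ deriv (fun s => (u s)⁻¹) s := fun s hs => by
    have hs : s ∈ Ici c := interior_subset hs
    rw [(hinv s hs).deriv, le_div_iff₀ (pow_pos (hpos s hs) 2)]
    linarith [hu' s hs]
  have := (convex_Ici c).mul_sub_le_image_sub_of_le_deriv
    (fun s hs => (hinv s hs).continuousAt.continuousWithinAt)
    (fun s hs => (hinv s (interior_subset hs)).differentiableAt.differentiableWithinAt) hk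
    c self_mem_Ici t ht ht
  linarith

theorem meanField_host_extinction (lam1 : ℝ) (hlam : 0 < lam1) (hle : lam1 ≤ 1)
    (u : ℝ → ℝ)
    (hderiv : ∀ t : ℝ, 0 ≤ t → HasDerivAt u ((lam1 * (1 - u t) - 1) * u t) t)
    (h0 : u 0 ∈ Set.Ioc (0 : ℝ) 1) :
    Tendsto u atTop (nhds 0) := by
  have hu_cont : ContinuousOn u (Ici 0) := fun t ht =>
    (hderiv t ht).continuousAt.continuousWithinAt
  have hpos : ∀ t ∈ Ici (0 : ℝ), 0 < u t := fun t ht =>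
    pos_of_hasDerivAt_mul_self (by fun_prop) hderiv h0.1 ht
  have hlogistic : ∀ t ∈ Ici (0 : ℝ), (lam1 * (1 - u t) - 1) * u t ≤ -lam1 * u t ^ 2 :=
    fun t ht => by nlinarith [hpos t ht]
  have hinv : Tendsto (fun t => (u t)⁻¹) atTop atTop := by
    refine tendsto_atTop_mono' _ ?_
      (tendsto_atTop_add_const_left _ (u 0)⁻¹ (tendsto_id.const_mul_atTop hlam))
    filter_upwards [eventually_ge_atTop 0] with t ht
    simpa using inv_add_mul_le_inv_of_hasDerivAt_le_neg_mul_sq hderiv hpos hlogistic ht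
  simpa only [Pi.inv_def, inv_inv] using hinv.inv_tendsto_atTop
end

section
/- Let λ₂ > 0, δ ≥ 0, and u* ∈ (0,1] with u* ≤ δ/λ₂. Then every differentiable solution v : [0,∞) → ℝ of v' = (λ₂(u* − v) − δ)v with v(0) ∈ (0, u*] satisfies v(t) → 0 as t → ∞. -/
open Filter Real Set

/-!
Along the manifold the equation reads `v' = a v` with `a = λ₂(u* - v) - δ`, so
`v t = v 0 * exp (∫₀ᵗ a)` stays positive. Since `λ₂ u* ≤ δ`, positivity gives `v' ≤ -λ₂ v²`,
i.e. `(1/v)' ≥ λ₂`; hence `1/v t ≥ λ₂ t → ∞` and `v t → 0`.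
-/

theorem eq_mul_exp_integral_of_hasDerivAt_mul {v a : ℝ → ℝ} (ha : Continuous a)
    (hv : ∀ t, 0 ≤ t → HasDerivAt v (a t * v t) t) {t : ℝ} (ht : 0 ≤ t) :
    v t = v 0 * exp (∫ s in (0 : ℝ)..t, a s) := by
  set A : ℝ → ℝ := fun t => ∫ s in (0 : ℝ)..t, a s
  have hA : ∀ s, HasDerivAt A (a s) s := fun s =>
    (ha.integral_hasStrictDerivAt 0 s).hasDerivAt
  set g : ℝ → ℝ := fun s => v s * exp (-A s)
  have hg : ∀ s, 0 ≤ s → HasDerivAt g 0 s := fun s hs =>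
    ((hv s hs).mul (hA s).neg.exp).congr_deriv (by simp only [Pi.neg_apply]; ring)
  have hg_const : g t = g 0 :=
    constant_of_has_deriv_right_zero (fun s hs => (hg s hs.1).continuousAt.continuousWithinAt)
      (fun s hs => (hg s hs.1).hasDerivWithinAt) t ⟨ht, le_rfl⟩
  have hA0 : A 0 = 0 := intervalIntegral.integral_same
  simp only [g, hA0, neg_zero, exp_zero, mul_one] at hg_const
  rw [← hg_const, mul_assoc, ← exp_add, neg_add_cancel, exp_zero, mul_one]

theorem tendsto_zero_of_hasDerivAt_le_neg_mul_sq {v v' : ℝ → ℝ} {c : ℝ} (hc : 0 < c)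
    (hv : ∀ t, 0 ≤ t → HasDerivAt v (v' t) t) (hpos : ∀ t, 0 ≤ t → 0 < v t)
    (hle : ∀ t, 0 ≤ t → v' t ≤ -c * v t ^ 2) :
    Tendsto v atTop (nhds 0) := by
  have hinv : ∀ t, 0 ≤ t → HasDerivAt (fun s => (v s)⁻¹) (-v' t / v t ^ 2) t := fun t ht =>
    (hv t ht).inv (hpos t ht).ne'
  have hinv_deriv : ∀ t ∈ interior (Ici (0 : ℝ)), c ≤ deriv (fun s => (v s)⁻¹) t := by
    intro t ht
    rw [interior_Ici] at ht
    have hvt := hpos t ht.le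
    rw [(hinv t ht.le).deriv, le_div_iff₀ (by positivity)]
    linarith [hle t ht.le]
  have hgrowth : ∀ t, 0 ≤ t → c * t ≤ (v t)⁻¹ := fun t ht => by
    have := (convex_Ici 0).mul_sub_le_image_sub_of_le_deriv
      (fun s hs => (hinv s hs).continuousAt.continuousWithinAt)
      (fun s hs => (hinv s (interior_subset hs)).differentiableAt.differentiableWithinAt)
      hinv_deriv 0 self_mem_Ici t ht ht
    linarith [inv_pos.mpr (hpos 0 le_rfl)]
  have hinv_atTop : Tendsto (fun t => (v t)⁻¹) atTop atTop :=
    tendsto_atTop_mono' atTop ((eventually_ge_atTop 0).mono hgrowth)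
      (tendsto_id.const_mul_atTop hc)
  simpa only [Pi.inv_def, inv_inv] using hinv_atTop.inv_tendsto_atTop

theorem meanField_infection_extinction_general (lam2 δ ustar : ℝ)
    (hlam2 : 0 < lam2)
    (hsub : ustar ≤ δ / lam2)
    (v : ℝ → ℝ)
    (hderiv : ∀ t : ℝ, 0 ≤ t → HasDerivAt v ((lam2 * (ustar - v t) - δ) * v t) t)
    (h0 : v 0 ∈ Set.Ioc (0 : ℝ) ustar) :
    Tendsto v atTop (nhds 0) := by
  have hrate : lam2 * ustar ≤ δ := (le_div_iff₀' hlam2).mp hsub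
  -- the coefficient is frozen at `v 0` for `t < 0` to make it continuous on all of `ℝ`
  set a : ℝ → ℝ := fun t => lam2 * (ustar - v (max t 0)) - δ
  have ha : Continuous a := by
    have hv : ContinuousOn v (Ici 0) := fun t ht => (hderiv t ht).continuousAt.continuousWithinAt
    have := hv.comp_continuous (continuous_id.max continuous_const) (fun t => le_max_right t 0)
    exact (continuous_const.sub this).const_mul lam2 |>.sub continuous_const
  have hderiv_a : ∀ t, 0 ≤ t → HasDerivAt v (a t * v t) t := fun t ht => by
    simpa only [a, max_eq_left ht] using hderiv t ht
  have hpos : ∀ t, 0 ≤ t → 0 < v t := fun t ht => by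
    rw [eq_mul_exp_integral_of_hasDerivAt_mul ha hderiv_a ht]
    exact mul_pos h0.1 (exp_pos _)
  refine tendsto_zero_of_hasDerivAt_le_neg_mul_sq hlam2 hderiv hpos fun t ht => ?_
  nlinarith [hpos t ht]

theorem meanField_infection_extinction (lam2 δ ustar : ℝ)
    (hlam2 : 0 < lam2) (hδ : 0 ≤ δ) (hu : ustar ∈ Set.Ioc (0 : ℝ) 1)
    (hsub : ustar ≤ δ / lam2)
    (v : ℝ → ℝ)
    (hderiv : ∀ t : ℝ, 0 ≤ t → HasDerivAt v ((lam2 * (ustar - v t) - δ) * v t) t)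
    (h0 : v 0 ∈ Set.Ioc (0 : ℝ) ustar) :
    Tendsto v atTop (nhds 0) :=
  meanField_infection_extinction_general lam2 δ ustar hlam2 hsub v hderiv h0
end

section
/- Let λ₂ > 0, δ ≥ 0, and u* ∈ (0,1] with λ₂·u* > δ. Then every differentiable solution v : [0,∞) → ℝ of v' = (λ₂(u* − v) − δ)v with v(0) ∈ (0, u*] satisfies v(t) → u* − δ/λ₂ as t → ∞, and this limit is strictly positive. -/
/-!
With `L = u* - δ / λ₂ > 0` the equation is the logistic equation `v' = λ₂ (L - v) v`. Its solution
through `v 0 > 0` is explicit, `L / (1 + C e^{-λ₂ L t})` with `1 + C = L / v 0 > 0`, so the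
denominator stays positive and the curve tends to `L`. Since the right-hand side is polynomial,
hence locally Lipschitz, `v` coincides with this curve on `[0, ∞)`.
-/

open Filter Real Set

theorem ODE_solution_unique_Ici_of_locallyLipschitz {E : Type*} [NormedAddCommGroup E]
    [NormedSpace ℝ E] {F : E → E} (hF : LocallyLipschitz F) {f g : ℝ → E} {a : ℝ}
    (hf : ∀ t, a ≤ t → HasDerivAt f (F (f t)) t) (hg : ∀ t, a ≤ t → HasDerivAt g (F (g t)) t)
    (ha : f a = g a) : EqOn f g (Ici a) := by
  intro T hT
  have hfc : ContinuousOn f (Icc a T) := fun t ht => (hf t ht.1).continuousAt.continuousWithinAt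
  have hgc : ContinuousOn g (Icc a T) := fun t ht => (hg t ht.1).continuousAt.continuousWithinAt
  -- both trajectories on `[a, T]` stay in a compact set, on which `F` is Lipschitz
  set s := f '' Icc a T ∪ g '' Icc a T
  obtain ⟨K, hK⟩ := (hF.locallyLipschitzOn (s := s)).exists_lipschitzOnWith_of_compact
    ((isCompact_Icc.image_of_continuousOn hfc).union (isCompact_Icc.image_of_continuousOn hgc))
  exact ODE_solution_unique_of_mem_Icc_right (v := fun _ => F) (s := fun _ => s)
    (fun _ _ => hK) hfc (fun t ht => (hf t ht.1).hasDerivWithinAt)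
    (fun t ht => .inl ⟨t, Ico_subset_Icc_self ht, rfl⟩) hgc
    (fun t ht => (hg t ht.1).hasDerivWithinAt) (fun t ht => .inr ⟨t, Ico_subset_Icc_self ht, rfl⟩)
    ha ⟨hT, le_rfl⟩

theorem one_add_mul_exp_neg_pos {C x : ℝ} (hC : 0 < 1 + C) (hx : 0 ≤ x) :
    0 < 1 + C * exp (-x) := by
  have hexp : exp (-x) ≤ 1 := exp_le_one_iff.2 (neg_nonpos.2 hx)
  rcases le_or_gt 0 C with hC0 | hC0
  · positivity
  · nlinarith

noncomputable def logisticCurve (r K C t : ℝ) : ℝ := K / (1 + C * exp (-(r * K * t)))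

theorem logisticCurve_zero (r K C : ℝ) : logisticCurve r K C 0 = K / (1 + C) := by
  simp [logisticCurve]

theorem hasDerivAt_logisticCurve {r K C t : ℝ} (ht : 1 + C * exp (-(r * K * t)) ≠ 0) :
    HasDerivAt (logisticCurve r K C)
      (r * (K - logisticCurve r K C t) * logisticCurve r K C t) t := by
  have hD : HasDerivAt (fun s => 1 + C * exp (-(r * K * s)))
      (C * (exp (-(r * K * t)) * -(r * K))) t :=
    ((((hasDerivAt_id t).const_mul (r * K)).neg.exp).const_mul C).const_add 1 |>.congr_deriv
      (by simp)
  refine ((hasDerivAt_const t K).fun_div hD ht).congr_deriv ?_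
  simp only [logisticCurve]
  field_simp
  ring

theorem tendsto_logisticCurve_atTop {r K C : ℝ} (hrK : 0 < r * K) :
    Tendsto (logisticCurve r K C) atTop (nhds K) := by
  have hexp : Tendsto (fun t => exp (-(r * K * t))) atTop (nhds 0) :=
    tendsto_exp_atBot.comp (tendsto_neg_atTop_atBot.comp (tendsto_id.const_mul_atTop hrK))
  have := tendsto_const_nhds (x := K) |>.div ((hexp.const_mul C).const_add 1) (by simp)
  rw [mul_zero, add_zero, div_one] at this
  exact this

theorem tendsto_of_hasDerivAt_logistic {r K : ℝ} (hr : 0 < r) (hK : 0 < K) {v : ℝ → ℝ}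
    (hv : ∀ t, 0 ≤ t → HasDerivAt v (r * (K - v t) * v t) t) (h0 : 0 < v 0) :
    Tendsto v atTop (nhds K) := by
  have hrK : 0 < r * K := mul_pos hr hK
  set C := K / v 0 - 1
  have hC1 : 1 + C = K / v 0 := by ring
  have hC : 0 < 1 + C := hC1 ▸ div_pos hK h0
  have hF : LocallyLipschitz fun x : ℝ => r * (K - x) * x :=
    ContDiff.locallyLipschitz (𝕂 := ℝ) (by fun_prop)
  have heq : EqOn v (logisticCurve r K C) (Ici 0) :=
    ODE_solution_unique_Ici_of_locallyLipschitz hF hv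
      (fun t ht => hasDerivAt_logisticCurve
        (one_add_mul_exp_neg_pos hC (mul_nonneg hrK.le ht)).ne')
      (by rw [logisticCurve_zero, hC1, div_div_cancel₀ hK.ne'])
  exact (tendsto_logisticCurve_atTop hrK).congr' <|
    (eventually_ge_atTop 0).mono fun t ht => (heq ht).symm

theorem meanField_infection_survival_general (lam2 δ ustar : ℝ)
    (hlam2 : 0 < lam2)
    (hsup : lam2 * ustar > δ)
    (v : ℝ → ℝ)
    (hderiv : ∀ t : ℝ, 0 ≤ t → HasDerivAt v ((lam2 * (ustar - v t) - δ) * v t) t)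
    (h0 : v 0 ∈ Set.Ioc (0 : ℝ) ustar) :
    Tendsto v atTop (nhds (ustar - δ / lam2)) ∧ 0 < ustar - δ / lam2 := by
  have hL : 0 < ustar - δ / lam2 := sub_pos.2 ((div_lt_iff₀' hlam2).2 hsup)
  have hfield (x : ℝ) : (lam2 * (ustar - x) - δ) * x = lam2 * (ustar - δ / lam2 - x) * x := by
    field_simp
    ring
  refine ⟨tendsto_of_hasDerivAt_logistic hlam2 hL (fun t ht => ?_) h0.1, hL⟩
  simpa only [hfield] using hderiv t ht

theorem meanField_infection_survival (lam2 δ ustar : ℝ)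
    (hlam2 : 0 < lam2) (hδ : 0 ≤ δ) (hu : ustar ∈ Set.Ioc (0 : ℝ) 1)
    (hsup : lam2 * ustar > δ)
    (v : ℝ → ℝ)
    (hderiv : ∀ t : ℝ, 0 ≤ t → HasDerivAt v ((lam2 * (ustar - v t) - δ) * v t) t)
    (h0 : v 0 ∈ Set.Ioc (0 : ℝ) ustar) :
    Tendsto v atTop (nhds (ustar - δ / lam2)) ∧ 0 < ustar - δ / lam2 :=
  meanField_infection_survival_general lam2 δ ustar hlam2 hsup v hderiv h0
end
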